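/- arXiv:1306.2470 — 8 statements merged into one kernel-verified Lean document; each statement's English description precedes it below -/
import Mathlib

section
/- For real parameters a, b with a ≠ ±b and ab ≠ 0, the cubic polynomial q(z) = 2abz³ + 3(a²+b²)z² + 6abz + (a²+b²) is strictly positive for all z in the closed interval [-1, 1]. -/
theorem stmt_0 (a b : ℝ) (hab : a ≠ b) (hab' : a ≠ -b) (hprod : a * b ≠ 0) :
    ∀ z ∈ Set.Icc (-1 : ℝ) 1,
      0 < 2*a*b*z^3 + 3*(a^2+b^2)*z^2 + 6*a*b*z + (a^2+b^2) := by
  rintro z ⟨hz1, hz2⟩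
  have h1 : (a - b) ^ 2 > 0 := by
    have : a - b ≠ 0 := sub_ne_zero.mpr hab
    positivity
  have h2 : (a + b) ^ 2 > 0 := by
    have : a + b ≠ 0 := fun h => hab' (by linarith)
    positivity
  rcases lt_or_ge z 1 with h | h
  · have : (1 - z) ^ 3 > 0 := pow_pos (by linarith) 3
    nlinarith [mul_pos h1 this, mul_nonneg h2.le (pow_nonneg (by linarith : (0:ℝ) ≤ 1 + z) 3)]
  · have hz : z = 1 := le_antisymm hz2 h
    subst hz
    nlinarith [h2]
end

section
/- For any real numbers a and b, the function z ↦ (az+b)²/(1-z²) is convex on the open interval (-1, 1). -/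
/-!
Partial fractions give
`(a z + b)² / (1 - z²) = -a² + (a + b)² / (2 (1 - z)) + (a - b)² / (2 (1 + z))`,
a constant plus nonnegative multiples of the convex functions `(1 - z)⁻¹` and `(1 + z)⁻¹`.
-/

open Set

lemma convexOn_inv_affine (c d : ℝ) :
    ConvexOn ℝ {z : ℝ | 0 < c + d * z} fun z => (c + d * z)⁻¹ := by
  have h := (convexOn_zpow (𝕜 := ℝ) (-1)).comp_affineMap (AffineMap.lineMap c (c + d))
  have hA (z : ℝ) : AffineMap.lineMap c (c + d) z = c + d * z := by
    rw [AffineMap.lineMap_apply_ring']; ring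
  simpa only [preimage, Function.comp_def, hA, zpow_neg_one, mem_Ioi] using h

lemma mul_add_sq_div_one_sub_sq {z : ℝ} (a b : ℝ) (h₁ : z ≠ 1) (h₂ : z ≠ -1) :
    (a * z + b) ^ 2 / (1 - z ^ 2)
      = -a ^ 2 + (a + b) ^ 2 / 2 * (1 - z)⁻¹ + (a - b) ^ 2 / 2 * (1 + z)⁻¹ := by
  have : 1 - z ≠ 0 := sub_ne_zero.2 h₁.symm
  have : 1 + z ≠ 0 := by contrapose! h₂; linarith
  have : 1 - z ^ 2 ≠ 0 := by rw [show 1 - z ^ 2 = (1 - z) * (1 + z) by ring]; positivity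
  field_simp
  ring

theorem stmt_1 (a b : ℝ) :
    ConvexOn ℝ (Set.Ioo (-1 : ℝ) 1) (fun z => (a*z+b)^2 / (1 - z^2)) := by
  have hsub : ConvexOn ℝ (Ioo (-1) 1) fun z : ℝ => (1 + -1 * z)⁻¹ :=
    (convexOn_inv_affine 1 (-1)).subset (fun z hz => show 0 < 1 + -1 * z by linarith [hz.2])
      (convex_Ioo _ _)
  have hadd : ConvexOn ℝ (Ioo (-1) 1) fun z : ℝ => (1 + 1 * z)⁻¹ :=
    (convexOn_inv_affine 1 1).subset (fun z hz => show 0 < 1 + 1 * z by linarith [hz.1])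
      (convex_Ioo _ _)
  have hsum := ((convexOn_const (-a ^ 2) (convex_Ioo (-1 : ℝ) 1)).add
    (hsub.smul (c := (a + b) ^ 2 / 2) (by positivity))).add
    (hadd.smul (c := (a - b) ^ 2 / 2) (by positivity))
  refine hsum.congr fun z hz => ?_
  rw [mul_add_sq_div_one_sub_sq a b hz.2.ne hz.1.ne']
  simp only [Pi.add_apply, smul_eq_mul]
  ring
end

section
/- Let λ > 0, C > 1 with λ = C·λ_thres where λ_thres = √(mgR³I₃α)(1+α)²/√(1+α-γ), and let β = 2mgR³αI₃γ²(γ+α²-1), with m,g,R,I₃ > 0, 0 < α < 1, 1-α² < γ < 1. If b satisfies αγλ/(1+α) < b < αγλ/(1-α), then ε := 2β/b² < 4/C² · (γ+α²-1)(1+α-γ)/(α²(1+α)²) < 1/C² < 1. -/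
/-! Since `ε = 2β / b²` decreases in `b > 0`, it is below its value at `b = αγλ/(1+α)`, which
simplifies to `4/C² · XY / (α²(1+α)²)` with `X = γ + α² - 1`, `Y = 1 + α - γ`. As
`X + Y = α(1+α)` and `X ≠ Y`, strict AM-GM bounds `XY / (α²(1+α)²)` by `1/4`. -/

theorem four_mul_lt_sq_add_of_ne {x y : ℝ} (h : x ≠ y) : 4 * (x * y) < (x + y) ^ 2 := by
  nlinarith [sq_pos_of_ne_zero (sub_ne_zero.mpr h)]

theorem factor_product_div_lt_quarter {α γ : ℝ} (hα : 0 < α) (hα1 : α < 1) (hγ : γ < 1) :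
    (γ + α^2 - 1) * (1 + α - γ) / (α^2 * (1 + α)^2) < 1/4 := by
  -- `γ < 1 < 1 + (α - α²) / 2`
  have hne : γ + α^2 - 1 ≠ 1 + α - γ := by nlinarith [mul_pos hα (sub_pos.mpr hα1)]
  have hsum : (γ + α^2 - 1) + (1 + α - γ) = α * (1 + α) := by ring
  have hamgm := four_mul_lt_sq_add_of_ne hne
  rw [hsum] at hamgm
  rw [div_lt_div_iff₀ (by positivity) four_pos]
  linarith [mul_pow α (1 + α) 2]

theorem sq_mul_sqrt_div_sqrt {A B : ℝ} (hA : 0 ≤ A) (hB : 0 ≤ B) (C a : ℝ) :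
    (C * (√A * a / √B))^2 = C^2 * A * a^2 / B := by
  rw [mul_pow, div_pow, mul_pow, Real.sq_sqrt hA, Real.sq_sqrt hB]
  ring

theorem div_sq_at_threshold {A B α γ C X : ℝ} (hA : 0 < A) (hB : 0 < B) (hα : 0 < α)
    (hγ : 0 < γ) (hC : 0 < C) :
    4 * A * γ^2 * X / (α * γ * (C * (√A * (1 + α)^2 / √B)) / (1 + α))^2
      = 4/C^2 * (X * B / (α^2 * (1 + α)^2)) := by
  rw [div_pow, mul_pow, sq_mul_sqrt_div_sqrt hA.le hB.le]
  field_simp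

theorem stmt_7_general (m grav R I₃ α γ lam C b : ℝ)
    (hm : 0 < m) (hg : 0 < grav) (hR : 0 < R) (hI₃ : 0 < I₃)
    (hα : 0 < α) (hα1 : α < 1) (hγl : 1 - α^2 < γ) (hγu : γ < 1)
    (hC : 1 < C)
    (hlam : lam = C * (Real.sqrt (m*grav*R^3*I₃*α) * (1+α)^2 / Real.sqrt (1 + α - γ)))
    (hb1 : α*γ*lam / (1+α) < b) :
    2*(2*m*grav*R^3*α*I₃*γ^2*(γ + α^2 - 1)) / b^2
        < 4/C^2 * ((γ + α^2 - 1)*(1 + α - γ) / (α^2*(1+α)^2)) ∧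
      4/C^2 * ((γ + α^2 - 1)*(1 + α - γ) / (α^2*(1+α)^2)) < 1/C^2 ∧
      1/C^2 < 1 := by
  have hC0 : 0 < C := by linarith
  have hA : 0 < m*grav*R^3*I₃*α := by positivity
  have hB : 0 < 1 + α - γ := by linarith
  have hX : 0 < γ + α^2 - 1 := by linarith
  have hγ : 0 < γ := by nlinarith
  have hb₁ : 0 < α*γ*lam / (1+α) := by rw [hlam]; positivity
  refine ⟨?_, ?_, ?_⟩
  · calc 2*(2*m*grav*R^3*α*I₃*γ^2*(γ + α^2 - 1)) / b^2
        < 4*(m*grav*R^3*I₃*α)*γ^2*(γ + α^2 - 1) / (α*γ*lam / (1+α))^2 := by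
          rw [show 2*(2*m*grav*R^3*α*I₃*γ^2*(γ + α^2 - 1))
            = 4*(m*grav*R^3*I₃*α)*γ^2*(γ + α^2 - 1) by ring]
          gcongr
      _ = _ := by rw [hlam]; exact div_sq_at_threshold hA hB hα hγ hC0
  · calc 4/C^2 * ((γ + α^2 - 1)*(1 + α - γ) / (α^2*(1+α)^2))
        < 4/C^2 * (1/4) :=
          mul_lt_mul_of_pos_left (factor_product_div_lt_quarter hα hα1 hγu) (by positivity)
      _ = 1/C^2 := by ring
  · exact (div_lt_one (by positivity)).mpr (one_lt_pow₀ hC two_ne_zero)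

theorem stmt_7 (m grav R I₃ α γ lam C b : ℝ)
    (hm : 0 < m) (hg : 0 < grav) (hR : 0 < R) (hI₃ : 0 < I₃)
    (hα : 0 < α) (hα1 : α < 1) (hγl : 1 - α^2 < γ) (hγu : γ < 1)
    (hC : 1 < C)
    (hlam : lam = C * (Real.sqrt (m*grav*R^3*I₃*α) * (1+α)^2 / Real.sqrt (1 + α - γ)))
    (hlampos : 0 < lam)
    (hb1 : α*γ*lam / (1+α) < b) (hb2 : b < α*γ*lam / (1-α)) :
    2*(2*m*grav*R^3*α*I₃*γ^2*(γ + α^2 - 1)) / b^2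
        < 4/C^2 * ((γ + α^2 - 1)*(1 + α - γ) / (α^2*(1+α)^2)) ∧
      4/C^2 * ((γ + α^2 - 1)*(1 + α - γ) / (α^2*(1+α)^2)) < 1/C^2 ∧
      1/C^2 < 1 :=
  stmt_7_general m grav R I₃ α γ lam C b hm hg hR hI₃ hα hα1 hγl hγu hC hlam hb1
end

section
/- Suppose 0 < α < 1, 1-α² < γ < 1, m,g,R,I₃ > 0, β = 2mgR³αI₃γ²(γ+α²-1), λ = Cλ_thres with C > 1 where λ_thres = √(mgR³I₃α)(1+α)²/√(1+α-γ), and 0 < ε ≤ 1 (a small parameter, with ε here denoting a geometric tolerance, not 2β/b²). Then (αγλ)² - (β/2)(2-ε)²(1+α)² > 0. -/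
/-!
With `K = m·grav·R³·I₃·α`, `p = γ + α² - 1` and `s = 1 + α - γ` (both positive), the threshold gives
`λ² s = C² K (1+α)⁴`, and multiplying the claim by `s` reduces it to
`C² (p + s)² > p s (2 - ε)²`, since `p + s = α (1 + α)`. This follows from AM-GM, `4 p s ≤ (p + s)²`,
together with `(2 - ε)² < 4 ≤ 4 C²`.
-/

lemma mul_mul_sq_two_sub_lt_sq_add {p s ε : ℝ} (hp : 0 < p) (hs : 0 < s) (hε : 0 < ε)
    (hε4 : ε < 4) : p * s * (2 - ε) ^ 2 < (p + s) ^ 2 :=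
  calc p * s * (2 - ε) ^ 2 < p * s * 4 := by gcongr; nlinarith
    _ ≤ (p + s) ^ 2 := by linarith [four_mul_le_sq_add p s]

lemma sq_mul_sqrt_mul_div_sqrt (C a : ℝ) {K s : ℝ} (hK : 0 ≤ K) (hs : 0 ≤ s) :
    (C * (√K * a / √s)) ^ 2 = C ^ 2 * K * a ^ 2 / s := by
  rw [mul_pow, div_pow, mul_pow, Real.sq_sqrt hK, Real.sq_sqrt hs]
  ring

theorem stmt_8 (m grav R I₃ α γ lam C ε : ℝ)
    (hm : 0 < m) (hg : 0 < grav) (hR : 0 < R) (hI₃ : 0 < I₃)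
    (hα : 0 < α) (hα1 : α < 1) (hγl : 1 - α^2 < γ) (hγu : γ < 1)
    (hC : 1 < C)
    (hlam : lam = C * (Real.sqrt (m*grav*R^3*I₃*α) * (1+α)^2 / Real.sqrt (1 + α - γ)))
    (hε : 0 < ε) (hε1 : ε ≤ 1) :
    0 < (α*γ*lam)^2
        - (2*m*grav*R^3*α*I₃*γ^2*(γ + α^2 - 1)) / 2 * (2 - ε)^2 * (1+α)^2 := by
  set K := m * grav * R ^ 3 * I₃ * α
  have hK : 0 < K := by positivity
  have hs : 0 < 1 + α - γ := by linarith
  have hlam2 : lam ^ 2 = C ^ 2 * K * ((1 + α) ^ 2) ^ 2 / (1 + α - γ) :=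
    hlam ▸ sq_mul_sqrt_mul_div_sqrt C _ hK.le hs.le
  have hγ : 0 < γ := by nlinarith
  have hp : 0 < γ + α ^ 2 - 1 := by linarith
  have hAMGM := mul_mul_sq_two_sub_lt_sq_add hp hs hε (by linarith)
  have hC2 : (γ + α ^ 2 - 1 + (1 + α - γ)) ^ 2 ≤ C ^ 2 * (γ + α ^ 2 - 1 + (1 + α - γ)) ^ 2 :=
    le_mul_of_one_le_left (sq_nonneg _) (one_le_pow₀ hC.le)
  refine (mul_pos_iff_of_pos_right hs).mp ?_
  have hscaled : ((α * γ * lam) ^ 2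
      - (2 * m * grav * R ^ 3 * α * I₃ * γ ^ 2 * (γ + α ^ 2 - 1)) / 2 * (2 - ε) ^ 2 * (1 + α) ^ 2)
        * (1 + α - γ) = K * γ ^ 2 * (1 + α) ^ 2 * (C ^ 2 * (γ + α ^ 2 - 1 + (1 + α - γ)) ^ 2
          - (γ + α ^ 2 - 1) * (1 + α - γ) * (2 - ε) ^ 2) := by
    rw [mul_pow, hlam2]; field_simp; ring
  rw [hscaled]
  exact mul_pos (by positivity) (by linarith)
end

section
/- Let a, b, β be real with β > 0, ε ∈ (0,1), and suppose (a-b)² = δ², ab = (αγλ - δ)(αγλ + αδ)/(1+α)² for some δ > 0 and parameters 0 < α < 1, γ, λ > 0. If α(1-α)γλδ + αδ² + (δ²/ε²)(1-ε)(1+α)² < α²γ²λ² - (β/2)(2-ε)²(1+α)², then p(-1+ε) = -2δ²(1-ε) + 2abε² - βε²(2-ε)² > 0, where p(z) = 2(az+b)(bz+a) - β(1-z²)². -/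
/-!
Expanding at `z = -1 + ε` and using `(a - b)² = δ²` gives
`p(-1 + ε) = 2 (ab ε² - δ² (1 - ε)) - β ε² (2 - ε)²`, so `p(-1 + ε) > 0` amounts to
`δ² (1 - ε) / ε² + (β / 2) (2 - ε)² < ab`. Since
`(αγλ - δ)(αγλ + αδ) = α²γ²λ² - α(1 - α)γλδ - αδ²`, the hypothesis on the parameters is exactly
this bound multiplied by `(1 + α)²`.
-/

/-- The numerator `p(z)` of the derivative of `f(z) = (az + b)² / (1 - z²) - βz`. -/
def potentialNumerator (a b β z : ℝ) : ℝ :=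
  2 * (a * z + b) * (b * z + a) - β * (1 - z ^ 2) ^ 2

theorem potentialNumerator_neg_one_add (a b β ε : ℝ) :
    potentialNumerator a b β (-1 + ε) =
      -2 * (a - b) ^ 2 * (1 - ε) + 2 * (a * b) * ε ^ 2 - β * ε ^ 2 * (2 - ε) ^ 2 := by
  unfold potentialNumerator
  ring

theorem potentialNumerator_neg_one_add_pos {a b β ε : ℝ} (hε : ε ≠ 0)
    (h : (a - b) ^ 2 / ε ^ 2 * (1 - ε) + β / 2 * (2 - ε) ^ 2 < a * b) :
    0 < potentialNumerator a b β (-1 + ε) := by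
  have hε2 : 0 < ε ^ 2 := by positivity
  have hscaled := mul_lt_mul_of_pos_right h hε2
  rw [add_mul, mul_right_comm, div_mul_cancel₀ _ hε2.ne'] at hscaled
  rw [potentialNumerator_neg_one_add]
  linear_combination 2 * hscaled

theorem lt_mul_of_tippeTop_condition {a b c α γ lam δ : ℝ} (hα : 0 < 1 + α)
    (hab : a * b = (α * γ * lam - δ) * (α * γ * lam + α * δ) / (1 + α) ^ 2)
    (h : α * (1 - α) * γ * lam * δ + α * δ ^ 2 + c * (1 + α) ^ 2 < α ^ 2 * γ ^ 2 * lam ^ 2) :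
    c < a * b := by
  rw [hab, lt_div_iff₀ (by positivity)]
  linear_combination h

theorem stmt_10_general (a b β δ ε α γ lam : ℝ)
    (hε : 0 < ε) (hα : 0 < α)
    (hab1 : (a - b)^2 = δ^2)
    (hab2 : a*b = (α*γ*lam - δ)*(α*γ*lam + α*δ) / (1+α)^2)
    (hcond : α*(1-α)*γ*lam*δ + α*δ^2 + (δ^2/ε^2)*(1-ε)*(1+α)^2
        < α^2*γ^2*lam^2 - (β/2)*(2-ε)^2*(1+α)^2) :
    2*(a*(-1+ε)+b)*(b*(-1+ε)+a) - β*(1-(-1+ε)^2)^2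
        = -2*δ^2*(1-ε) + 2*(a*b)*ε^2 - β*ε^2*(2-ε)^2 ∧
    0 < 2*(a*(-1+ε)+b)*(b*(-1+ε)+a) - β*(1-(-1+ε)^2)^2 := by
  have hab : (a - b) ^ 2 / ε ^ 2 * (1 - ε) + β / 2 * (2 - ε) ^ 2 < a * b := by
    refine lt_mul_of_tippeTop_condition (by linarith) hab2 ?_
    rw [hab1]
    linear_combination hcond
  rw [← hab1]
  exact ⟨potentialNumerator_neg_one_add a b β ε, potentialNumerator_neg_one_add_pos hε.ne' hab⟩

theorem stmt_10 (a b β δ ε α γ lam : ℝ) (hβ : 0 < β)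
    (hε : 0 < ε) (hε1 : ε < 1) (hδ : 0 < δ)
    (hα : 0 < α) (hα1 : α < 1) (hγ : 0 < γ) (hlam : 0 < lam)
    (hab1 : (a - b)^2 = δ^2)
    (hab2 : a*b = (α*γ*lam - δ)*(α*γ*lam + α*δ) / (1+α)^2)
    (hcond : α*(1-α)*γ*lam*δ + α*δ^2 + (δ^2/ε^2)*(1-ε)*(1+α)^2
        < α^2*γ^2*lam^2 - (β/2)*(2-ε)^2*(1+α)^2) :
    2*(a*(-1+ε)+b)*(b*(-1+ε)+a) - β*(1-(-1+ε)^2)^2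
        = -2*δ^2*(1-ε) + 2*(a*b)*ε^2 - β*ε^2*(2-ε)^2 ∧
    0 < 2*(a*(-1+ε)+b)*(b*(-1+ε)+a) - β*(1-(-1+ε)^2)^2 :=
  stmt_10_general a b β δ ε α γ lam hε hα hab1 hab2 hcond
end

section
/- Let a, b, β be real with β > 0, ε ∈ (0,1), δ > 0, and parameters 0 < α < 1, γ, λ > 0 with (a+b)² = δ², ab = -(αγλ - δ)(αγλ - αδ)/(1-α)². If (δ²/ε²)(1-ε)(1-α)² + αγλδ(1+α) - αδ² < α²γ²λ² + (β/2)(2-ε)²(1-α)², then p(1-ε) = 2δ²(1-ε) - (2ε²/(1-α)²)((αγλ-δ)(αγλ-αδ) + 2β(1-α)²) + βε³(4-ε) < 0, where p(z) = 2(az+b)(bz+a) - β(1-z²)². -/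
section

variable {a b β δ ε c K : ℝ}

theorem potentialNumerator_one_sub (a b β ε : ℝ) :
    potentialNumerator a b β (1 - ε)
      = 2 * (a + b) ^ 2 * (1 - ε) + 2 * (a * b) * ε ^ 2 - β * ε ^ 2 * (2 - ε) ^ 2 := by
  unfold potentialNumerator
  ring

theorem potentialNumerator_one_sub_eq (hc : c ≠ 0) (hab1 : (a + b) ^ 2 = δ ^ 2)
    (hab2 : a * b = -K / c) :
    potentialNumerator a b β (1 - ε)
      = 2 * δ ^ 2 * (1 - ε) - (2 * ε ^ 2 / c) * (K + 2 * β * c) + β * ε ^ 3 * (4 - ε) := by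
  rw [potentialNumerator_one_sub, hab1, hab2]
  field_simp
  ring

theorem potentialNumerator_one_sub_neg (hc : 0 < c) (hε : ε ≠ 0) (hab1 : (a + b) ^ 2 = δ ^ 2)
    (hab2 : a * b = -K / c) (h : (δ ^ 2 / ε ^ 2) * (1 - ε) * c < K + (β / 2) * (2 - ε) ^ 2 * c) :
    potentialNumerator a b β (1 - ε) < 0 := by
  have hscaled : 2 * δ ^ 2 * (1 - ε) < 2 * ε ^ 2 * (K / c) + β * ε ^ 2 * (2 - ε) ^ 2 := by
    calc 2 * δ ^ 2 * (1 - ε) = 2 * ε ^ 2 / c * ((δ ^ 2 / ε ^ 2) * (1 - ε) * c) := by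
          field_simp
      _ < 2 * ε ^ 2 / c * (K + (β / 2) * (2 - ε) ^ 2 * c) := by gcongr
      _ = 2 * ε ^ 2 * (K / c) + β * ε ^ 2 * (2 - ε) ^ 2 := by
          field_simp
  rw [potentialNumerator_one_sub, hab1, hab2, neg_div]
  linarith

end

theorem stmt_12_general (a b β δ ε α γ lam : ℝ)
    (hε : 0 < ε)
    (hα1 : α < 1)
    (hab1 : (a + b)^2 = δ^2)
    (hab2 : a*b = -((α*γ*lam - δ)*(α*γ*lam - α*δ)) / (1-α)^2)
    (hcond : (δ^2/ε^2)*(1-ε)*(1-α)^2 + α*γ*lam*δ*(1+α) - α*δ^2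
        < α^2*γ^2*lam^2 + (β/2)*(2-ε)^2*(1-α)^2) :
    2*(a*(1-ε)+b)*(b*(1-ε)+a) - β*(1-(1-ε)^2)^2
        = 2*δ^2*(1-ε)
            - (2*ε^2/(1-α)^2)*((α*γ*lam - δ)*(α*γ*lam - α*δ) + 2*β*(1-α)^2)
            + β*ε^3*(4-ε) ∧
    2*(a*(1-ε)+b)*(b*(1-ε)+a) - β*(1-(1-ε)^2)^2 < 0 := by
  have hc : 0 < (1 - α) ^ 2 := pow_pos (sub_pos.2 hα1) 2
  have hcond' : (δ^2/ε^2)*(1-ε)*(1-α)^2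
      < (α*γ*lam - δ)*(α*γ*lam - α*δ) + (β/2)*(2-ε)^2*(1-α)^2 := by
    linarith [show (α*γ*lam - δ)*(α*γ*lam - α*δ)
      = α^2*γ^2*lam^2 - α*γ*lam*δ*(1+α) + α*δ^2 by ring]
  exact ⟨potentialNumerator_one_sub_eq hc.ne' hab1 hab2,
    potentialNumerator_one_sub_neg hc hε.ne' hab1 hab2 hcond'⟩

theorem stmt_12 (a b β δ ε α γ lam : ℝ) (hβ : 0 < β)
    (hε : 0 < ε) (hε1 : ε < 1) (hδ : 0 < δ)
    (hα : 0 < α) (hα1 : α < 1) (hγ : 0 < γ) (hlam : 0 < lam)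
    (hab1 : (a + b)^2 = δ^2)
    (hab2 : a*b = -((α*γ*lam - δ)*(α*γ*lam - α*δ)) / (1-α)^2)
    (hcond : (δ^2/ε^2)*(1-ε)*(1-α)^2 + α*γ*lam*δ*(1+α) - α*δ^2
        < α^2*γ^2*lam^2 + (β/2)*(2-ε)^2*(1-α)^2) :
    2*(a*(1-ε)+b)*(b*(1-ε)+a) - β*(1-(1-ε)^2)^2
        = 2*δ^2*(1-ε)
            - (2*ε^2/(1-α)^2)*((α*γ*lam - δ)*(α*γ*lam - α*δ) + 2*β*(1-α)^2)
            + β*ε^3*(4-ε) ∧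
    2*(a*(1-ε)+b)*(b*(1-ε)+a) - β*(1-(1-ε)^2)^2 < 0 :=
  stmt_12_general a b β δ ε α γ lam hε hα1 hab1 hab2 hcond
end

section
/- For the function h₁(z,w) = -(1+zw)(w+z)(1-z²)/(1+w²+2wz)², defined for (z,w) ∈ [-1,1] × (-1,1), the only critical points in the interior are (1/√3, 0) and (-1/√3, 0), with h₁(1/√3, 0) = -2/(3√3) and h₁(-1/√3, 0) = 2/(3√3); moreover |h₁(z,w)| ≤ 2/(3√3) for all (z,w) ∈ [-1,1] × (-1,1). -/
/-!
Write `D = 1 + w² + 2wz = (w + z)² + (1 - z²)` and `N = (1 + zw)(w + z)(1 - z²)`, so `h₁ = -N / D²`.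

Critical points: the derivative of `h₁` along `(0, 1)` is `-(1 - z²) G / D³`, and along
`(-(1 - z²), 1 + zw)` it is `w (w + z) (1 - z²)² / D²`. The second direction is `∂/∂θ` for the
substitution `z = cos θ`, `w + z = t sin θ`, under which `h₁ = -t (sin θ + t cos θ) / (1 + t²)²`.
On `w = 0` we have `G = 1 - 3z²`, and on `w = -z` we have `G = (1 - z²)² > 0`.

Bound: `(1 + zw)² = D - w² (1 - z²) ≤ D`, and AM-GM `27 x s² ≤ 4 (x + s)³` with `x = (w + z)²`,
`s = 1 - z²` gives `27 N² ≤ 4 D⁴`.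
-/

open ContinuousLinearMap

theorem ContinuousLinearMap.eq_zero_iff_of_fst_ne_zero {𝕜 M : Type*} [Field 𝕜]
    [TopologicalSpace 𝕜] [AddCommGroup M] [Module 𝕜 M] [TopologicalSpace M]
    (L : 𝕜 × 𝕜 →L[𝕜] M) {c : 𝕜} (d : 𝕜) (hc : c ≠ 0) :
    L = 0 ↔ L (0, 1) = 0 ∧ L (c, d) = 0 := by
  refine ⟨by rintro rfl; simp, fun ⟨h01, hcd⟩ => ext fun ⟨x, y⟩ => ?_⟩
  have hxy : ((x, y) : 𝕜 × 𝕜) = (x / c) • (c, d) + (y - x / c * d) • (0, 1) := by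
    ext <;> simp [hc]
  rw [hxy, map_add, map_smul, map_smul, h01, hcd, smul_zero, smul_zero, add_zero, zero_apply]

theorem mul_sq_le_add_cube {x s : ℝ} (hx : 0 ≤ x) (hs : 0 ≤ s) :
    27 * (x * s ^ 2) ≤ 4 * (x + s) ^ 3 := by
  nlinarith [mul_nonneg (sq_nonneg (2 * x - s)) (by positivity : 0 ≤ x + 4 * s)]

theorem three_mul_sq_eq_one_iff {z : ℝ} :
    3 * z ^ 2 = 1 ↔ z = 1 / Real.sqrt 3 ∨ z = -(1 / Real.sqrt 3) := by
  rw [← sq_eq_sq_iff_eq_or_eq_neg, div_pow, one_pow, Real.sq_sqrt (by norm_num)]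
  constructor <;> intro h <;> linarith

namespace TippeTop

noncomputable def h₁ (q : ℝ × ℝ) : ℝ :=
  -((1 + q.1*q.2)*(q.2 + q.1)*(1 - q.1^2)) / (1 + q.2^2 + 2*q.2*q.1)^2

def G (z w : ℝ) : ℝ := 1 - 3*w^2 - 4*z*w - 2*z*w^3 - 3*z^2*w^2 - 3*z^2 - 2*z^3*w

variable {z w : ℝ}

theorem denom_pos (hz : z ^ 2 < 1) : 0 < 1 + w^2 + 2*w*z := by
  nlinarith [sq_nonneg (w + z)]

theorem hasFDerivAt_h₁ (hD : 1 + w^2 + 2*w*z ≠ 0) :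
    HasFDerivAt h₁
      ((-((1 + z*w) * G z w + w*(w + z)*(1 - z^2)*(1 + w^2 + 2*w*z)) / (1 + w^2 + 2*w*z)^3) •
          fst ℝ ℝ ℝ +
        (-((1 - z^2) * G z w) / (1 + w^2 + 2*w*z)^3) • snd ℝ ℝ ℝ) (z, w) := by
  have hz : HasFDerivAt (fun q : ℝ × ℝ => q.1) (fst ℝ ℝ ℝ) (z, w) := hasFDerivAt_fst
  have hw : HasFDerivAt (fun q : ℝ × ℝ => q.2) (snd ℝ ℝ ℝ) (z, w) := hasFDerivAt_snd
  have hnum := ((((hz.mul hw).const_add 1).mul (hw.add hz)).mul ((hz.pow 2).const_sub 1)).neg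
  have hden := (((hw.pow 2).const_add 1).add ((hw.const_mul 2).mul hz)).pow 2
  have hinv := (hasDerivAt_inv (pow_ne_zero 2 hD)).comp_hasFDerivAt (z, w) hden
  refine (hnum.mul hinv).congr_fderiv (ext fun ⟨v₁, v₂⟩ => ?_)
  simp only [Pi.mul_apply, Pi.neg_apply, Pi.add_apply, Nat.add_one_sub_one, pow_one, smul_add,
    nsmul_eq_mul, Nat.cast_ofNat, mul_one, neg_smul, smul_neg, neg_neg, Function.comp_apply,
    neg_add_rev, add_apply, smul_apply, coe_snd', smul_eq_mul, coe_fst', neg_apply, G]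
  field_simp
  ring

theorem fderiv_h₁_eq_zero_iff (hz : z ^ 2 < 1) :
    fderiv ℝ h₁ (z, w) = 0 ↔ G z w = 0 ∧ w * (w + z) = 0 := by
  have hD := (denom_pos (w := w) hz).ne'
  have hs : 1 - z ^ 2 ≠ 0 := by linarith
  rw [(hasFDerivAt_h₁ hD).fderiv, eq_zero_iff_of_fst_ne_zero _ (1 + z*w) (neg_ne_zero.2 hs)]
  simp only [add_apply, smul_apply, coe_fst', coe_snd', smul_eq_mul]
  have hsnd : -((1 - z^2) * G z w) / (1 + w^2 + 2*w*z)^3 = 0 ↔ G z w = 0 := by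
    simp [hs, hD]
  generalize 1 + w^2 + 2*w*z = D at hD hsnd ⊢
  have hdir : -((1 + z*w) * G z w + w*(w + z)*(1 - z^2)*D) / D^3 * -(1 - z^2) +
      -((1 - z^2) * G z w) / D^3 * (1 + z*w) = w * (w + z) * (1 - z^2)^2 / D^2 := by
    field_simp
    ring
  simp only [mul_zero, zero_add, mul_one, hdir, hsnd]
  simp [hs, hD]

theorem G_eq_zero_and_iff (hz : z ^ 2 < 1) :
    G z w = 0 ∧ w * (w + z) = 0 ↔ w = 0 ∧ 3 * z ^ 2 = 1 := by
  constructor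
  · rintro ⟨hG, hw⟩
    obtain rfl | hwz := mul_eq_zero.1 hw
    · exact ⟨rfl, by simp only [G] at hG; linarith⟩
    · have hG' : G z w = (1 - z^2)^2 := by
        rw [show w = -z by linarith, G]; ring
      nlinarith
  · rintro ⟨rfl, hz3⟩
    exact ⟨by simp only [G]; linarith, by ring⟩

theorem h₁_apply_zero_right (z : ℝ) : h₁ (z, 0) = -(z * (1 - z^2)) := by
  simp [h₁]

theorem sq_numerator_le (hz : z ^ 2 ≤ 1) :
    27 * ((1 + z*w)*(w + z)*(1 - z^2))^2 ≤ 4 * (1 + w^2 + 2*w*z)^4 := by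
  have hs : 0 ≤ 1 - z^2 := by linarith
  have hD : (w + z)^2 + (1 - z^2) = 1 + w^2 + 2*w*z := by ring
  have hcs : (1 + z*w)^2 ≤ 1 + w^2 + 2*w*z := by nlinarith [mul_nonneg (sq_nonneg w) hs]
  have hamgm := mul_sq_le_add_cube (sq_nonneg (w + z)) hs
  rw [hD] at hamgm
  calc 27 * ((1 + z*w)*(w + z)*(1 - z^2))^2 = (1 + z*w)^2 * (27 * ((w + z)^2 * (1 - z^2)^2)) := by
        ring
    _ ≤ (1 + w^2 + 2*w*z) * (4 * (1 + w^2 + 2*w*z)^3) := by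
        gcongr
        exact hD ▸ by positivity
    _ = 4 * (1 + w^2 + 2*w*z)^4 := by ring

theorem abs_h₁_le (hz : z ^ 2 ≤ 1) : |h₁ (z, w)| ≤ 2 / (3 * Real.sqrt 3) := by
  have h3 : Real.sqrt 3 ^ 2 = 3 := Real.sq_sqrt (by norm_num)
  dsimp only [h₁]
  rw [abs_div, abs_neg, abs_pow]
  refine div_le_of_le_mul₀ (by positivity) (by positivity) (abs_le_of_sq_le_sq ?_ (by positivity))
  have hc : (2 / (3 * Real.sqrt 3) * (1 + w^2 + 2*w*z)^2)^2 = 4 * (1 + w^2 + 2*w*z)^4 / 27 := by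
    rw [mul_pow, div_pow, mul_pow, h3]; ring
  rw [sq_abs, hc, le_div_iff₀ (by norm_num)]
  linarith [sq_numerator_le (w := w) hz]

end TippeTop

open TippeTop

theorem stmt_13 :
    (∀ p ∈ Set.Ioo (-1 : ℝ) 1 ×ˢ Set.Ioo (-1 : ℝ) 1,
      fderiv ℝ (fun q : ℝ × ℝ =>
          -((1 + q.1*q.2)*(q.2 + q.1)*(1 - q.1^2)) / (1 + q.2^2 + 2*q.2*q.1)^2) p = 0
        ↔ p = (1/Real.sqrt 3, 0) ∨ p = (-(1/Real.sqrt 3), 0)) ∧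
    -((1 + (1/Real.sqrt 3)*(0:ℝ))*((0:ℝ) + 1/Real.sqrt 3)*(1 - (1/Real.sqrt 3)^2))
        / (1 + (0:ℝ)^2 + 2*0*(1/Real.sqrt 3))^2 = -(2/(3*Real.sqrt 3)) ∧
    -((1 + (-(1/Real.sqrt 3))*(0:ℝ))*((0:ℝ) + -(1/Real.sqrt 3))*(1 - (-(1/Real.sqrt 3))^2))
        / (1 + (0:ℝ)^2 + 2*0*(-(1/Real.sqrt 3)))^2 = 2/(3*Real.sqrt 3) ∧
    ∀ z ∈ Set.Icc (-1 : ℝ) 1, ∀ w ∈ Set.Ioo (-1 : ℝ) 1,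
      |(-((1 + z*w)*(w + z)*(1 - z^2))) / (1 + w^2 + 2*w*z)^2| ≤ 2/(3*Real.sqrt 3) := by
  have hsq : (1 / Real.sqrt 3) ^ 2 = 1 / 3 := by
    rw [div_pow, one_pow, Real.sq_sqrt (by norm_num)]
  refine ⟨?_, ?_, ?_, fun z hz w _ => abs_h₁_le (sq_le_one_iff_abs_le_one z |>.2 (abs_le.2 hz))⟩
  · rintro ⟨z, w⟩ ⟨hz, -⟩
    have hz2 : z ^ 2 < 1 := sq_lt_one_iff_abs_lt_one z |>.2 (abs_lt.2 hz)
    change fderiv ℝ h₁ (z, w) = 0 ↔ _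
    rw [fderiv_h₁_eq_zero_iff hz2, G_eq_zero_and_iff hz2, three_mul_sq_eq_one_iff]
    simp only [Prod.mk.injEq]
    tauto
  · change h₁ (1 / Real.sqrt 3, 0) = _
    rw [h₁_apply_zero_right, hsq]
    ring
  · change h₁ (-(1 / Real.sqrt 3), 0) = _
    rw [h₁_apply_zero_right, neg_sq, hsq]
    ring
end

section
/- Under the assumptions 0 < α < 1, 1-α² < γ < 1, m, g, R, I₃ > 0, b > 0, β = 2mgR³αI₃γ²(γ+α²-1), and with g(z) = I₃(α²+(1-γ)²-2α(1-γ)z)/(2(γ+α²-1)), for all z* ∈ (-1,1), z₁ ∈ (-1,1), w ∈ (-1,1) with |(1-z₁²)/(1+w²+2wz₁)| ≤ 1, and ε = 2β/b², the quantity (2π√g(z*)/√(2mgRα))·√((1-z₁²)/(1+w²+2wz₁))·√ε is strictly less than T_max := 2πRI₃γ(α+1-γ)/b. -/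
/-!
The nutation-period factor `g(z) = I₃(α² + (1-γ)² - 2α(1-γ)z) / (2(γ+α²-1))` is affine in `z`
with negative slope, so `g(z*) < g(-1) = I₃(α+1-γ)² / (2(γ+α²-1))` for `z* > -1`. Bounding the
square-root factor by `1` and substituting `g(-1)`, all square roots collapse:
`g(-1) · 2β/b² / (2mgRα) = (R I₃ γ (α+1-γ) / b)²`.
-/

noncomputable def nutationFactor (I₃ α γ z : ℝ) : ℝ :=
  I₃ * (α^2 + (1-γ)^2 - 2*α*(1-γ)*z) / (2*(γ + α^2 - 1))

lemma nutationFactor_strictAnti {I₃ α γ : ℝ} (hI₃ : 0 < I₃) (hα : 0 < α) (hγ : γ < 1)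
    (hD : 0 < γ + α^2 - 1) : StrictAnti (nutationFactor I₃ α γ) := by
  intro z z' hzz'
  unfold nutationFactor
  have hslope : 0 < α * (1 - γ) := mul_pos hα (by linarith)
  gcongr

lemma nutationFactor_neg_one (I₃ α γ : ℝ) :
    nutationFactor I₃ α γ (-1) = I₃ * (α + 1 - γ)^2 / (2*(γ + α^2 - 1)) := by
  unfold nutationFactor
  ring

lemma sqrt_nutationFactor_neg_one_div_mul_sqrt {m grav R I₃ α γ b : ℝ}
    (hm : 0 < m) (hg : 0 < grav) (hR : 0 < R) (hI₃ : 0 < I₃) (hα : 0 < α) (hγ : 0 < γ)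
    (hαγ : 0 ≤ α + 1 - γ) (hD : 0 < γ + α^2 - 1) (hb : 0 < b) :
    Real.sqrt (nutationFactor I₃ α γ (-1)) / Real.sqrt (2*m*grav*R*α)
        * Real.sqrt (2*(2*m*grav*R^3*α*I₃*γ^2*(γ + α^2 - 1)) / b^2)
      = R*I₃*γ*(α + 1 - γ) / b := by
  rw [← Real.sqrt_div' _ (by positivity), ← Real.sqrt_mul' _ (by positivity),
    nutationFactor_neg_one]
  have hsq : I₃ * (α + 1 - γ)^2 / (2*(γ + α^2 - 1)) / (2*m*grav*R*α)
        * (2*(2*m*grav*R^3*α*I₃*γ^2*(γ + α^2 - 1)) / b^2)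
      = (R*I₃*γ*(α + 1 - γ) / b)^2 := by
    field_simp
  rw [hsq, Real.sqrt_sq (by positivity)]

theorem stmt_18_general (m grav R I₃ α γ b zstar z₁ w : ℝ)
    (hm : 0 < m) (hg : 0 < grav) (hR : 0 < R) (hI₃ : 0 < I₃)
    (hα : 0 < α) (hα1 : α < 1) (hγl : 1 - α^2 < γ) (hγu : γ < 1)
    (hb : 0 < b)
    (hzstar : zstar ∈ Set.Ioo (-1 : ℝ) 1)
    (hratio : |(1 - z₁^2)/(1 + w^2 + 2*w*z₁)| ≤ 1) :
    (2*Real.pi*Real.sqrt (I₃*(α^2 + (1-γ)^2 - 2*α*(1-γ)*zstar) / (2*(γ + α^2 - 1)))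
          / Real.sqrt (2*m*grav*R*α))
        * Real.sqrt ((1 - z₁^2)/(1 + w^2 + 2*w*z₁))
        * Real.sqrt (2*(2*m*grav*R^3*α*I₃*γ^2*(γ + α^2 - 1)) / b^2)
      < 2*Real.pi*R*I₃*γ*(α + 1 - γ) / b := by
  have hD : 0 < γ + α^2 - 1 := by linarith
  have hγ : 0 < γ := by nlinarith
  have hαγ : 0 < α + 1 - γ := by linarith
  have hg_lt : nutationFactor I₃ α γ zstar < nutationFactor I₃ α γ (-1) :=
    nutationFactor_strictAnti hI₃ hα hγu hD hzstar.1
  have hsqrt_lt : Real.sqrt (nutationFactor I₃ α γ zstar)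
      < Real.sqrt (nutationFactor I₃ α γ (-1)) :=
    (Real.sqrt_lt_sqrt_iff_of_pos (by rw [nutationFactor_neg_one]; positivity)).2 hg_lt
  have hratio_le : Real.sqrt ((1 - z₁^2)/(1 + w^2 + 2*w*z₁)) ≤ 1 :=
    Real.sqrt_le_one.mpr (le_of_abs_le hratio)
  change 2*Real.pi*Real.sqrt (nutationFactor I₃ α γ zstar) / _ * _ * _ < _
  calc _ ≤ 2*Real.pi*Real.sqrt (nutationFactor I₃ α γ zstar) / Real.sqrt (2*m*grav*R*α) * 1
          * Real.sqrt (2*(2*m*grav*R^3*α*I₃*γ^2*(γ + α^2 - 1)) / b^2) := by gcongr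
    _ < 2*Real.pi*Real.sqrt (nutationFactor I₃ α γ (-1)) / Real.sqrt (2*m*grav*R*α) * 1
          * Real.sqrt (2*(2*m*grav*R^3*α*I₃*γ^2*(γ + α^2 - 1)) / b^2) := by gcongr
    _ = 2*Real.pi*R*I₃*γ*(α + 1 - γ) / b := by
        rw [mul_one, mul_div_assoc, mul_assoc, sqrt_nutationFactor_neg_one_div_mul_sqrt hm hg hR
          hI₃ hα hγ hαγ.le hD hb]
        ring

theorem stmt_18 (m grav R I₃ α γ b zstar z₁ w : ℝ)
    (hm : 0 < m) (hg : 0 < grav) (hR : 0 < R) (hI₃ : 0 < I₃)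
    (hα : 0 < α) (hα1 : α < 1) (hγl : 1 - α^2 < γ) (hγu : γ < 1)
    (hb : 0 < b)
    (hzstar : zstar ∈ Set.Ioo (-1 : ℝ) 1)
    (hz₁ : z₁ ∈ Set.Ioo (-1 : ℝ) 1) (hw : w ∈ Set.Ioo (-1 : ℝ) 1)
    (hratio : |(1 - z₁^2)/(1 + w^2 + 2*w*z₁)| ≤ 1) :
    (2*Real.pi*Real.sqrt (I₃*(α^2 + (1-γ)^2 - 2*α*(1-γ)*zstar) / (2*(γ + α^2 - 1)))
          / Real.sqrt (2*m*grav*R*α))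
        * Real.sqrt ((1 - z₁^2)/(1 + w^2 + 2*w*z₁))
        * Real.sqrt (2*(2*m*grav*R^3*α*I₃*γ^2*(γ + α^2 - 1)) / b^2)
      < 2*Real.pi*R*I₃*γ*(α + 1 - γ) / b :=
  stmt_18_general m grav R I₃ α γ b zstar z₁ w hm hg hR hI₃ hα hα1 hγl hγu hb hzstar hratio
end
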